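/- Let X and Y be compact pathwise connected metric spaces, let E be a smooth reflexive Banach space, and let Δ : Lip(X,E) → Lip(Y,E) be a 2-local isometry. Suppose y ∈ Y and x ∈ X are such that there exist norm-one functionals u*, v* ∈ S_{E*} with v*(Δ(h)(y)) = u*(h(x)) for every h ∈ Lip(X,E). Then the map V : E → E defined by V(e) = Δ(f)(y), where f is any function in Lip(X,E) with f(x) = e, is well defined and is a 2-local isometry on E; that is, for all e_1, e_2 ∈ E there exists a surjective linear isometry W ∈ Iso(E) with V(e_1) = W(e_1) and V(e_2) = W(e_2). In particular, if E is 2-iso-reflexive, then V is a surjective linear isometry of E. -/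

import Mathlib

open Function Metric Set
open scoped NNReal

/-- A function between a metric space and a normed space is bounded and Lipschitz. -/
def IsBddLip {X E : Type*} [MetricSpace X] [NormedAddCommGroup E] (f : X → E) : Prop :=
  (∃ K : ℝ, ∀ x y : X, ‖f x - f y‖ ≤ K * dist x y) ∧ ∃ C : ℝ, ∀ x : X, ‖f x‖ ≤ C

/-- The Lipschitz constant `L(f)` of a function. -/
noncomputable def lipConst {X E : Type*} [MetricSpace X] [NormedAddCommGroup E] (f : X → E) : ℝ :=
  sInf {K : ℝ | 0 ≤ K ∧ ∀ x y : X, ‖f x - f y‖ ≤ K * dist x y}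

/-- The norm `max {L(f), ‖f‖∞}` of the space `Lip(X,E)`. -/
noncomputable def lipNorm {X E : Type*} [MetricSpace X] [NormedAddCommGroup E] (f : X → E) : ℝ :=
  max (lipConst f) (⨆ x : X, ‖f x‖)

/-- `T` is a surjective linear isometry from `Lip(X,E)` onto `Lip(Y,F)` (encoded on plain
functions, with all requirements imposed on bounded Lipschitz functions). -/
structure IsLipIso (𝕜 : Type*) {X Y E F : Type*} [RCLike 𝕜] [MetricSpace X] [MetricSpace Y]
    [NormedAddCommGroup E] [NormedSpace 𝕜 E] [NormedAddCommGroup F] [NormedSpace 𝕜 F]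
    (T : (X → E) → (Y → F)) : Prop where
  mapsLip : ∀ f, IsBddLip f → IsBddLip (T f)
  map_add : ∀ f g, IsBddLip f → IsBddLip g → T (f + g) = T f + T g
  map_smul : ∀ (c : 𝕜) (f), IsBddLip f → T (c • f) = c • T f
  norm_map : ∀ f, IsBddLip f → lipNorm (T f) = lipNorm f
  surjOn : ∀ g, IsBddLip g → ∃ f, IsBddLip f ∧ T f = g

/-- `Δ : Lip(X,E) → Lip(Y,F)` is a `2`-local isometry. -/
def Is2LocalLipIso (𝕜 : Type*) {X Y E F : Type*} [RCLike 𝕜] [MetricSpace X] [MetricSpace Y]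
    [NormedAddCommGroup E] [NormedSpace 𝕜 E] [NormedAddCommGroup F] [NormedSpace 𝕜 F]
    (Δ : (X → E) → (Y → F)) : Prop :=
  ∀ f g : X → E, IsBddLip f → IsBddLip g →
    ∃ T : (X → E) → (Y → F), IsLipIso 𝕜 T ∧ Δ f = T f ∧ Δ g = T g

/-- `φ` preserves distances less than `2`. -/
def PreservesDistLT2 {Y X : Type*} [MetricSpace Y] [MetricSpace X] (φ : Y → X) : Prop :=
  ∀ y y' : Y, dist y y' < 2 → dist (φ y) (φ y') = dist y y'

/-- Two points lie in the same `2`-component: they are joined by a finite chain of points with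
consecutive distances less than `2`. -/
def SameTwoComponent {Y : Type*} [MetricSpace Y] : Y → Y → Prop :=
  Relation.ReflTransGen fun a b => dist a b < 2

/-- `T` is a standard isometry from `Lip(X,E)` to `Lip(Y,F)`: there are `φ ∈ Iso_{<2}(Y,X)` and
`J : Y → Iso(E,F)` constant on `2`-components with `T f y = J y (f (φ y))`. -/
def IsStandardLipIso (𝕜 : Type*) {X Y E F : Type*} [RCLike 𝕜] [MetricSpace X] [MetricSpace Y]
    [NormedAddCommGroup E] [NormedSpace 𝕜 E] [NormedAddCommGroup F] [NormedSpace 𝕜 F]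
    (T : (X → E) → (Y → F)) : Prop :=
  ∃ (φ : Y → X) (ψ : X → Y) (J : Y → E ≃ₗᵢ[𝕜] F),
    Function.LeftInverse ψ φ ∧ Function.RightInverse ψ φ ∧
    PreservesDistLT2 φ ∧ PreservesDistLT2 ψ ∧
    (∀ y y' : Y, SameTwoComponent y y' → J y = J y') ∧
    ∀ f, IsBddLip f → ∀ y : Y, T f y = J y (f (φ y))

/-- `Δ : Lip(X,E) → Lip(Y,F)` is a `2`-local standard isometry. -/
def Is2LocalStdLipIso (𝕜 : Type*) {X Y E F : Type*} [RCLike 𝕜] [MetricSpace X] [MetricSpace Y]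
    [NormedAddCommGroup E] [NormedSpace 𝕜 E] [NormedAddCommGroup F] [NormedSpace 𝕜 F]
    (Δ : (X → E) → (Y → F)) : Prop :=
  ∀ f g : X → E, IsBddLip f → IsBddLip g →
    ∃ T : (X → E) → (Y → F), IsStandardLipIso 𝕜 T ∧ Δ f = T f ∧ Δ g = T g

/-- A normed space is smooth: every norm-one vector has a unique norm-one supporting functional. -/
def IsSmooth (𝕜 : Type*) (E : Type*) [RCLike 𝕜] [NormedAddCommGroup E] [NormedSpace 𝕜 E] :
    Prop :=
  ∀ e : E, ‖e‖ = 1 → ∃! u : StrongDual 𝕜 E, ‖u‖ = 1 ∧ u e = 1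

/-- A normed space is reflexive: the canonical inclusion in the double dual is onto. -/
def IsReflexiveSp (𝕜 : Type*) (E : Type*) [RCLike 𝕜] [NormedAddCommGroup E] [NormedSpace 𝕜 E] :
    Prop :=
  Function.Surjective (NormedSpace.inclusionInDoubleDual 𝕜 E)

/-- `E` is `2`-iso-reflexive: every `2`-local isometry on `E` is linear and surjective. -/
def TwoIsoReflexive (𝕜 : Type*) (E : Type*) [RCLike 𝕜] [NormedAddCommGroup E] [NormedSpace 𝕜 E] :
    Prop :=
  ∀ Δ : E → E, (∀ a b : E, ∃ T : E ≃ₗᵢ[𝕜] E, Δ a = T a ∧ Δ b = T b) →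
    (∀ a b : E, Δ (a + b) = Δ a + Δ b) ∧ (∀ (c : 𝕜) (a : E), Δ (c • a) = c • Δ a) ∧
      Function.Surjective Δ

/-- The set `A_{x,u*,f} = {(y,v*) ∈ Y × B_{F*} : v*(Δ(f)(y)) = u*(f(x))}`. -/
def setA (𝕜 : Type*) {X Y E F : Type*} [RCLike 𝕜] [MetricSpace X] [MetricSpace Y]
    [NormedAddCommGroup E] [NormedSpace 𝕜 E] [NormedAddCommGroup F] [NormedSpace 𝕜 F]
    (Δ : (X → E) → (Y → F)) (x : X) (u : StrongDual 𝕜 E) (f : X → E) :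
    Set (Y × StrongDual 𝕜 F) :=
  {p | ‖p.2‖ ≤ 1 ∧ p.2 (Δ f p.1) = u (f x)}

/-- The set `A_{x,u*} = ⋂_{f ∈ Lip(X,E)} A_{x,u*,f}`. -/
def setAInter (𝕜 : Type*) {X Y E F : Type*} [RCLike 𝕜] [MetricSpace X] [MetricSpace Y]
    [NormedAddCommGroup E] [NormedSpace 𝕜 E] [NormedAddCommGroup F] [NormedSpace 𝕜 F]
    (Δ : (X → E) → (Y → F)) (x : X) (u : StrongDual 𝕜 E) :
    Set (Y × StrongDual 𝕜 F) :=
  ⋂ f ∈ {f : X → E | IsBddLip f}, setA 𝕜 Δ x u f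

/-!
A surjective linear isometry `S : Lip(X,E) → Lip(Y,E)` with `w (S f y) = ρ (f x)` for all `f`,
where `ρ ≠ 0`, satisfies `S f y = B (f x)` for some `B ∈ Iso(E)`. Indeed, let `ν` be a norm-one
functional; by reflexivity it attains its norm at some `e`, and by smoothness `ν ∘ δ_y ∘ S` is the
only norm-one functional supporting `S⁻¹` of the tent of height `e` at `y`. On compact `X` that
function is also normed by a point evaluation `μ ∘ δ_{x'}` or by a de Leeuw functional, which
vanishes on the constants. Testing `(w + 3ν) / ‖w + 3ν‖` rules out the second case, and comparing
the points of `w`, `ν` and `w + ν` shows `x' = x`.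

For `Δ`, the tent of height `e₀` at `x`, where `u e₀ = 1`, is sent by `v ∘ δ_y ∘ Δ` to `1`, so
every isometry agreeing with `Δ` there has this form; hence `‖V e‖ = ‖e‖`. A functional norming
`V e` then provides the seed `w` for the isometry agreeing with `Δ` at `f` and at the tent of
height `e`, which gives both well-definedness and 2-locality.
-/
noncomputable section

variable {𝕜 X Y E : Type*} [RCLike 𝕜] [MetricSpace X] [MetricSpace Y] [NormedAddCommGroup E]
  [NormedSpace 𝕜 E]

section LipschitzConstant

variable {f g : X → E}

namespace IsBddLip

lemma const (e : E) : IsBddLip fun _ : X => e :=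
  ⟨⟨0, fun _ _ => by simp⟩, ⟨‖e‖, fun _ => le_rfl⟩⟩

lemma zero : IsBddLip (0 : X → E) := const 0

lemma add (hf : IsBddLip f) (hg : IsBddLip g) : IsBddLip (f + g) := by
  obtain ⟨⟨K, hK⟩, C, hC⟩ := hf
  obtain ⟨⟨K', hK'⟩, C', hC'⟩ := hg
  refine ⟨⟨K + K', fun z z' => ?_⟩, C + C', fun z =>
    (norm_add_le _ _).trans (add_le_add (hC z) (hC' z))⟩
  calc ‖(f + g) z - (f + g) z'‖ = ‖(f z - f z') + (g z - g z')‖ := by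
        simp only [Pi.add_apply]; abel_nf
    _ ≤ K * dist z z' + K' * dist z z' := (norm_add_le _ _).trans (add_le_add (hK z z') (hK' z z'))
    _ = (K + K') * dist z z' := by ring

lemma smul (c : 𝕜) (hf : IsBddLip f) : IsBddLip (c • f) := by
  obtain ⟨⟨K, hK⟩, C, hC⟩ := hf
  refine ⟨⟨‖c‖ * K, fun z z' => ?_⟩, ‖c‖ * C, fun z => ?_⟩
  · rw [Pi.smul_apply, Pi.smul_apply, ← smul_sub, norm_smul, mul_assoc]
    exact mul_le_mul_of_nonneg_left (hK z z') (norm_nonneg c)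
  · rw [Pi.smul_apply, norm_smul]
    exact mul_le_mul_of_nonneg_left (hC z) (norm_nonneg c)

lemma exists_pos_bound (hf : IsBddLip f) :
    ∃ K > 0, (∀ z z', ‖f z - f z'‖ ≤ K * dist z z') ∧ ∀ z, ‖f z‖ ≤ K := by
  obtain ⟨⟨K, hK⟩, C, hC⟩ := hf
  refine ⟨max (max K C) 1, one_pos.trans_le (le_max_right _ _), fun z z' => (hK z z').trans ?_,
    fun z => (hC z).trans ((le_max_right _ _).trans (le_max_left _ _))⟩
  exact mul_le_mul_of_nonneg_right ((le_max_left _ _).trans (le_max_left _ _)) dist_nonneg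

lemma continuous (hf : IsBddLip f) : Continuous f := by
  obtain ⟨K, -, hK, -⟩ := hf.exists_pos_bound
  exact (LipschitzWith.of_dist_le_mul fun z z' => by
    rw [dist_eq_norm, Real.coe_toNNReal']
    exact (hK z z').trans (mul_le_mul_of_nonneg_right (le_max_left _ _) dist_nonneg) :
    LipschitzWith (Real.toNNReal K) f).continuous

end IsBddLip

lemma norm_sub_le_lipConst_mul (hf : IsBddLip f) (z z' : X) :
    ‖f z - f z'‖ ≤ lipConst f * dist z z' := by
  obtain ⟨⟨K, hK⟩, -⟩ := hf
  rcases eq_or_ne z z' with rfl | hzz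
  · simp
  have hd : 0 < dist z z' := dist_pos.2 hzz
  rw [← div_le_iff₀ hd]
  refine le_csInf ⟨max K 0, le_max_right _ _, fun a b => (hK a b).trans ?_⟩ fun K' hK' => ?_
  · exact mul_le_mul_of_nonneg_right (le_max_left _ _) dist_nonneg
  · exact (div_le_iff₀ hd).2 (hK'.2 z z')

lemma lipConst_nonneg (f : X → E) : 0 ≤ lipConst f :=
  Real.sInf_nonneg fun _ hK => hK.1

lemma lipConst_le {K : ℝ} (hK₀ : 0 ≤ K) (hK : ∀ z z', ‖f z - f z'‖ ≤ K * dist z z') :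
    lipConst f ≤ K :=
  csInf_le ⟨0, fun _ hK' => hK'.1⟩ ⟨hK₀, hK⟩

lemma lipConst_const (e : E) : lipConst (fun _ : X => e) = 0 :=
  (lipConst_le le_rfl fun _ _ => by simp).antisymm (lipConst_nonneg _)

lemma norm_le_lipNorm (hf : IsBddLip f) (z : X) : ‖f z‖ ≤ lipNorm f := by
  obtain ⟨-, C, hC⟩ := hf
  exact (le_ciSup ⟨C, by rintro _ ⟨z, rfl⟩; exact hC z⟩ z).trans (le_max_right _ _)

lemma lipNorm_le [Nonempty X] {K : ℝ} (hK₀ : 0 ≤ K) (hL : ∀ z z', ‖f z - f z'‖ ≤ K * dist z z')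
    (hC : ∀ z, ‖f z‖ ≤ K) : lipNorm f ≤ K :=
  max_le (lipConst_le hK₀ hL) (ciSup_le hC)

lemma lipNorm_const [Nonempty X] (e : E) : lipNorm (fun _ : X => e) = ‖e‖ :=
  (lipNorm_le (norm_nonneg e) (fun _ _ => by simp; positivity) fun _ => le_rfl).antisymm
    (norm_le_lipNorm (IsBddLip.const e) (Classical.arbitrary X))

lemma lipNorm_zero : lipNorm (0 : X → E) = 0 := by
  rw [lipNorm, show (0 : X → E) = fun _ => 0 from rfl, lipConst_const]
  simp

lemma eq_zero_of_lipNorm_le_zero (hf : IsBddLip f) (h : lipNorm f ≤ 0) : f = 0 :=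
  funext fun z => norm_le_zero_iff.1 ((norm_le_lipNorm hf z).trans h)

end LipschitzConstant

section Bump

variable (𝕜) in
def bump (m : ℝ) (x : X) (e : E) : X → E :=
  fun z => ((max (1 - dist z x / m) 0 : ℝ) : 𝕜) • e

variable {m : ℝ} {x z z' : X} {e : E}

lemma bump_self : bump 𝕜 m x e x = e := by simp [bump]

lemma norm_bump : ‖bump 𝕜 m x e z‖ = max (1 - dist z x / m) 0 * ‖e‖ := by
  rw [bump, norm_smul, RCLike.norm_ofReal, abs_of_nonneg (le_max_right _ _)]

lemma bump_of_le_dist (hm : 0 < m) (h : m ≤ dist z x) : bump 𝕜 m x e z = 0 := by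
  have : 1 - dist z x / m ≤ 0 := sub_nonpos.2 ((one_le_div hm).2 h)
  simp [bump, max_eq_right this]

lemma norm_bump_le (hm : 0 < m) : ‖bump 𝕜 m x e z‖ ≤ ‖e‖ := by
  rw [norm_bump]
  refine mul_le_of_le_one_left (norm_nonneg e) (max_le ?_ zero_le_one)
  linarith [div_nonneg dist_nonneg hm.le (a := dist z x)]

lemma norm_bump_sub_le (hm : 0 < m) :
    ‖bump 𝕜 m x e z - bump 𝕜 m x e z'‖ ≤ ‖e‖ / m * dist z z' := by
  rw [bump, bump, ← sub_smul, ← RCLike.ofReal_sub, norm_smul, RCLike.norm_ofReal, mul_comm,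
    div_mul_eq_mul_div, mul_div_assoc]
  gcongr
  refine (abs_max_sub_max_le_abs _ _ _).trans ?_
  rw [sub_sub_sub_cancel_left, ← sub_div, abs_div, abs_of_pos hm, abs_sub_comm]
  gcongr
  exact abs_dist_sub_le z z' x

lemma isBddLip_bump (hm : 0 < m) (x : X) (e : E) : IsBddLip (bump 𝕜 m x e) :=
  ⟨⟨‖e‖ / m, fun _ _ => norm_bump_sub_le hm⟩, ‖e‖, fun _ => norm_bump_le hm⟩

lemma lipNorm_bump (hm : 1 ≤ m) : lipNorm (bump 𝕜 m x e) = ‖e‖ := by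
  have hm₀ : 0 < m := one_pos.trans_le hm
  have : Nonempty X := ⟨x⟩
  refine (lipNorm_le (norm_nonneg e) (fun z z' => (norm_bump_sub_le hm₀).trans ?_)
    fun _ => norm_bump_le hm₀).antisymm ?_
  · exact mul_le_mul_of_nonneg_right (div_le_self (norm_nonneg e) hm) dist_nonneg
  · simpa [bump_self] using norm_le_lipNorm (isBddLip_bump hm₀ x e) x

lemma lipNorm_bump_add_smul_le_one (he : ‖e‖ = 1) {g : X → E} (hg : IsBddLip g) (hgx : g x = 0) :
    ∃ t > 0, ∀ μ : 𝕜, ‖μ‖ ≤ t → lipNorm (bump 𝕜 2 x e + μ • g) ≤ 1 := by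
  obtain ⟨K, hK, hgK, hgC⟩ := hg.exists_pos_bound
  refine ⟨1 / (2 * K), by positivity, fun μ hμ => ?_⟩
  have hμK : ‖μ‖ * K ≤ 1 / 2 := by
    rw [le_div_iff₀ (by positivity)] at hμ
    linarith
  have : Nonempty X := ⟨x⟩
  refine lipNorm_le zero_le_one (fun z z' => ?_) fun z => ?_
  · calc ‖(bump 𝕜 2 x e + μ • g) z - (bump 𝕜 2 x e + μ • g) z'‖
          = ‖(bump 𝕜 2 x e z - bump 𝕜 2 x e z') + μ • (g z - g z')‖ := by
            simp only [Pi.add_apply, Pi.smul_apply, smul_sub]; abel_nf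
      _ ≤ 1 / 2 * dist z z' + ‖μ‖ * (K * dist z z') := by
          refine (norm_add_le _ _).trans (add_le_add ?_ ?_)
          · simpa [he] using norm_bump_sub_le (𝕜 := 𝕜) (e := e) (x := x) two_pos (z := z) (z' := z')
          · rw [norm_smul]; exact mul_le_mul_of_nonneg_left (hgK z z') (norm_nonneg μ)
      _ ≤ 1 * dist z z' := by nlinarith [dist_nonneg (x := z) (y := z')]
  · rw [Pi.add_apply, Pi.smul_apply]
    refine (norm_add_le _ _).trans ?_
    rw [norm_smul]
    rcases le_or_gt (dist z x) 2 with hd | hd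
    · have hgz : ‖g z‖ ≤ K * dist z x := by simpa [hgx] using hgK z x
      have hbz : ‖bump 𝕜 2 x e z‖ = 1 - dist z x / 2 := by
        rw [norm_bump, he, mul_one, max_eq_left (by linarith)]
      rw [hbz]
      nlinarith [mul_le_mul_of_nonneg_left hgz (norm_nonneg μ), dist_nonneg (x := z) (y := x)]
    · rw [bump_of_le_dist two_pos hd.le, norm_zero, zero_add]
      nlinarith [mul_le_mul_of_nonneg_left (hgC z) (norm_nonneg μ)]

end Bump

variable (𝕜 X E) in
def bddLip : Submodule 𝕜 (X → E) where
  carrier := {f | IsBddLip f}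
  add_mem' := IsBddLip.add
  zero_mem' := IsBddLip.zero
  smul_mem' c _ hf := IsBddLip.smul c hf

instance : CoeFun (bddLip 𝕜 X E) fun _ => X → E := ⟨Subtype.val⟩

instance : Norm (bddLip 𝕜 X E) := ⟨fun f => lipNorm (f : X → E)⟩

namespace bddLip

lemma mem_iff {f : X → E} : f ∈ bddLip 𝕜 X E ↔ IsBddLip f := Iff.rfl

lemma isBddLip (f : bddLip 𝕜 X E) : IsBddLip (f : X → E) := mem_iff.1 f.2

lemma norm_apply_le (f : bddLip 𝕜 X E) (z : X) : ‖f z‖ ≤ ‖f‖ := norm_le_lipNorm (isBddLip f) z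

variable (𝕜 X) in
def const : E →ₗ[𝕜] bddLip 𝕜 X E where
  toFun e := ⟨fun _ => e, mem_iff.2 (IsBddLip.const e)⟩
  map_add' _ _ := rfl
  map_smul' _ _ := rfl

@[simp] lemma coe_const (e : E) : (const 𝕜 X e : X → E) = fun _ => e := rfl

lemma norm_const [Nonempty X] (e : E) : ‖const 𝕜 X e‖ = ‖e‖ := lipNorm_const e

variable (𝕜) in
def eval (z : X) : bddLip 𝕜 X E →ₗ[𝕜] E := LinearMap.proj z ∘ₗ (bddLip 𝕜 X E).subtype

@[simp] lemma eval_apply (z : X) (f : bddLip 𝕜 X E) : eval 𝕜 z f = f z := rfl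

variable (𝕜) in
def peak (x : X) : E →ₗ[𝕜] bddLip 𝕜 X E where
  toFun e := ⟨bump 𝕜 2 x e, mem_iff.2 (isBddLip_bump two_pos x e)⟩
  map_add' _ _ := Subtype.ext <| funext fun _ => smul_add _ _ _
  map_smul' _ _ := Subtype.ext <| funext fun _ => smul_comm _ _ _

@[simp] lemma peak_self (x : X) (e : E) : peak 𝕜 x e x = e := bump_self

lemma norm_peak (x : X) (e : E) : ‖peak 𝕜 x e‖ = ‖e‖ := lipNorm_bump one_le_two

end bddLip

open bddLip

section Peak

lemma eq_zero_of_forall_norm_one_add_mul_le_one {a : 𝕜} {t : ℝ} (ht : 0 < t)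
    (h : ∀ μ : 𝕜, ‖μ‖ ≤ t → ‖1 + μ * a‖ ≤ 1) : a = 0 := by
  by_contra ha
  have hna : 0 < ‖a‖ := norm_pos_iff.2 ha
  set μ : 𝕜 := ((t / ‖a‖ : ℝ) : 𝕜) * starRingEnd 𝕜 a
  have hμ : ‖μ‖ = t := by
    rw [norm_mul, RCLike.norm_ofReal, RCLike.norm_conj, abs_of_pos (div_pos ht hna),
      div_mul_cancel₀ _ hna.ne']
  have hμa : 1 + μ * a = ((1 + t * ‖a‖ : ℝ) : 𝕜) := by
    rw [mul_assoc, RCLike.conj_mul]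
    push_cast
    field_simp
  have := h μ hμ.le
  rw [hμa, RCLike.norm_ofReal, abs_of_pos (by positivity)] at this
  nlinarith

variable {Λ : bddLip 𝕜 X E →ₗ[𝕜] 𝕜} {x : X} {e : E}

lemma apply_eq_zero_of_apply_peak (hΛ : ∀ f, ‖Λ f‖ ≤ ‖f‖) (he : ‖e‖ = 1)
    (hpeak : Λ (peak 𝕜 x e) = 1) {g : bddLip 𝕜 X E} (hg : g x = 0) : Λ g = 0 := by
  obtain ⟨t, ht, hbound⟩ := lipNorm_bump_add_smul_le_one (𝕜 := 𝕜) he (isBddLip g) hg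
  refine eq_zero_of_forall_norm_one_add_mul_le_one ht fun μ hμ => ?_
  calc ‖1 + μ * Λ g‖ = ‖Λ (peak 𝕜 x e + μ • g)‖ := by rw [map_add, map_smul, hpeak, smul_eq_mul]
    _ ≤ 1 := (hΛ _).trans (hbound μ hμ)

lemma exists_dual_of_apply_peak (hΛ : ∀ f, ‖Λ f‖ ≤ ‖f‖) (he : ‖e‖ = 1)
    (hpeak : Λ (peak 𝕜 x e) = 1) :
    ∃ ν : StrongDual 𝕜 E, ‖ν‖ ≤ 1 ∧ ν e = 1 ∧ ∀ f, Λ f = ν (f x) := by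
  have : Nonempty X := ⟨x⟩
  have hbound (e' : E) : ‖(Λ ∘ₗ const 𝕜 X) e'‖ ≤ 1 * ‖e'‖ := by
    simpa [norm_const] using hΛ (const 𝕜 X e')
  set ν := (Λ ∘ₗ const 𝕜 X).mkContinuous 1 hbound
  have hν (f : bddLip 𝕜 X E) : Λ f = ν (f x) := by
    have hvanish : Λ (f - const 𝕜 X (f x)) = 0 :=
      apply_eq_zero_of_apply_peak hΛ he hpeak (by simp)
    rw [map_sub, sub_eq_zero] at hvanish
    exact hvanish
  refine ⟨ν, LinearMap.mkContinuous_norm_le _ zero_le_one hbound, ?_, hν⟩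
  rw [← hpeak, hν, peak_self]

lemma norm_eq_one_of_apply_eq_one {ν : StrongDual 𝕜 E} (hν : ‖ν‖ ≤ 1) (he : ‖e‖ = 1)
    (hνe : ν e = 1) : ‖ν‖ = 1 :=
  hν.antisymm (by simpa [hνe, he] using ν.le_opNorm e)

lemma IsSmooth.eq_of_apply_eq_one (hsm : IsSmooth 𝕜 E) (he : ‖e‖ = 1) {ν₁ ν₂ : StrongDual 𝕜 E}
    (hν₁ : ‖ν₁‖ ≤ 1) (hν₁e : ν₁ e = 1) (hν₂ : ‖ν₂‖ ≤ 1) (hν₂e : ν₂ e = 1) : ν₁ = ν₂ :=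
  (hsm e he).unique ⟨norm_eq_one_of_apply_eq_one hν₁ he hν₁e, hν₁e⟩
    ⟨norm_eq_one_of_apply_eq_one hν₂ he hν₂e, hν₂e⟩

lemma IsSmooth.apply_eq_of_apply_peak (hsm : IsSmooth 𝕜 E) (hΛ : ∀ f, ‖Λ f‖ ≤ ‖f‖)
    (he : ‖e‖ = 1) (hpeak : Λ (peak 𝕜 x e) = 1) {ν : StrongDual 𝕜 E} (hν : ‖ν‖ ≤ 1)
    (hνe : ν e = 1) (f : bddLip 𝕜 X E) : Λ f = ν (f x) := by
  obtain ⟨ν', hν', hν'e, hΛν'⟩ := exists_dual_of_apply_peak hΛ he hpeak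
  rw [hΛν', hsm.eq_of_apply_eq_one he hν' hν'e hν hνe]

lemma IsReflexiveSp.exists_apply_eq_one (hrefl : IsReflexiveSp 𝕜 E) {ν : StrongDual 𝕜 E}
    (hν : ‖ν‖ = 1) : ∃ e : E, ‖e‖ = 1 ∧ ν e = 1 := by
  obtain ⟨G, hG, hGν⟩ := exists_dual_vector 𝕜 ν (by simp [hν])
  obtain ⟨e, rfl⟩ := hrefl G
  refine ⟨e, ?_, ?_⟩
  · rw [← hG]; exact ((NormedSpace.inclusionInDoubleDualLi 𝕜).norm_map e).symm
  · simpa [hν] using hGν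

end Peak

section Slopes

open scoped ENNReal

lemma norm_inv_dist_smul_sub_le {f : X → E} (hf : IsBddLip f) (z z' : X) :
    ‖((dist z z' : 𝕜))⁻¹ • (f z - f z')‖ ≤ lipConst f := by
  rw [norm_smul, norm_inv, RCLike.norm_ofReal, abs_of_nonneg dist_nonneg]
  rcases eq_or_ne z z' with rfl | hzz
  · simpa using lipConst_nonneg f
  · rw [inv_mul_le_iff₀ (dist_pos.2 hzz), mul_comm]
    exact norm_sub_le_lipConst_mul hf z z'

variable (𝕜 X E) in
/-- The de Leeuw map; on the diagonal the entry is `0⁻¹ • 0 = 0`. -/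
def slopes : bddLip 𝕜 X E →ₗ[𝕜] lp (fun _ : X × X => E) ∞ where
  toFun f := ⟨fun p => ((dist p.1 p.2 : 𝕜))⁻¹ • (f p.1 - f p.2),
    memℓp_infty ⟨lipConst (f : X → E), by
      rintro _ ⟨p, rfl⟩; exact norm_inv_dist_smul_sub_le (isBddLip f) p.1 p.2⟩⟩
  map_add' f g := lp.ext <| funext fun p => by
    change ((dist p.1 p.2 : 𝕜))⁻¹ • ((f p.1 + g p.1) - (f p.2 + g p.2)) =
      ((dist p.1 p.2 : 𝕜))⁻¹ • (f p.1 - f p.2) + ((dist p.1 p.2 : 𝕜))⁻¹ • (g p.1 - g p.2)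
    rw [add_sub_add_comm, smul_add]
  map_smul' c f := lp.ext <| funext fun p => by
    change ((dist p.1 p.2 : 𝕜))⁻¹ • (c • f p.1 - c • f p.2) =
      c • (((dist p.1 p.2 : 𝕜))⁻¹ • (f p.1 - f p.2))
    rw [← smul_sub, smul_comm]

lemma norm_slopes (f : bddLip 𝕜 X E) : ‖slopes 𝕜 X E f‖ = lipConst (f : X → E) := by
  refine (lp.norm_le_of_forall_le (lipConst_nonneg _)
    fun p => norm_inv_dist_smul_sub_le (isBddLip f) p.1 p.2).antisymm
    (lipConst_le (norm_nonneg _) fun z z' => ?_)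
  rcases eq_or_ne z z' with rfl | hzz
  · simp
  have hd : 0 < dist z z' := dist_pos.2 hzz
  have h := lp.norm_apply_le_norm ENNReal.top_ne_zero (slopes 𝕜 X E f) (z, z')
  change ‖((dist z z' : 𝕜))⁻¹ • (f z - f z')‖ ≤ _ at h
  rwa [norm_smul, norm_inv, RCLike.norm_ofReal, abs_of_pos hd, inv_mul_le_iff₀ hd, mul_comm] at h

lemma exists_functional_eq_lipConst (r : bddLip 𝕜 X E) :
    ∃ Φ : bddLip 𝕜 X E →ₗ[𝕜] 𝕜, (∀ f, ‖Φ f‖ ≤ lipConst (f : X → E)) ∧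
      Φ r = lipConst (r : X → E) := by
  obtain ⟨g, hg, hgr⟩ := exists_dual_vector'' 𝕜 (slopes 𝕜 X E r)
  refine ⟨g.toLinearMap ∘ₗ slopes 𝕜 X E, fun f => ?_, by simpa [norm_slopes] using hgr⟩
  calc ‖g (slopes 𝕜 X E f)‖ ≤ ‖g‖ * ‖slopes 𝕜 X E f‖ := g.le_opNorm _
    _ ≤ lipConst (f : X → E) := by
        rw [norm_slopes]; exact mul_le_of_le_one_left (lipConst_nonneg _) hg

lemma exists_norm_apply_eq_iSup [CompactSpace X] [Nonempty X] (f : bddLip 𝕜 X E) :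
    ∃ x₀, ‖f x₀‖ = ⨆ z, ‖f z‖ := by
  obtain ⟨x₀, -, hx₀⟩ := isCompact_univ.exists_isMaxOn univ_nonempty
    ((isBddLip f).continuous.norm.continuousOn (s := univ))
  exact ⟨x₀, (ciSup_eq_of_forall_le_of_forall_lt_exists_gt (f := fun z => ‖f z‖)
    (fun z => hx₀ (mem_univ z)) fun _ hw => ⟨x₀, hw⟩).symm⟩

/-- `‖r‖ = max (L r) (sup ‖r‖)` is attained either by `L r`, giving a de Leeuw functional, or,
by compactness, by `‖r x₀‖` at some point. -/
lemma exists_norming_functional [CompactSpace X] [Nonempty X] {r : bddLip 𝕜 X E} (hr : ‖r‖ = 1) :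
    ∃ Φ : bddLip 𝕜 X E →ₗ[𝕜] 𝕜, (∀ f, ‖Φ f‖ ≤ ‖f‖) ∧ Φ r = 1 ∧
      ((∃ (x₀ : X) (μ : StrongDual 𝕜 E), ‖μ‖ = 1 ∧ ∀ f, Φ f = μ (f x₀)) ∨
        ∀ e, Φ (const 𝕜 X e) = 0) := by
  rcases max_eq_iff.1 hr with ⟨hL, -⟩ | ⟨hsup, -⟩
  · obtain ⟨Φ, hΦ, hΦr⟩ := exists_functional_eq_lipConst r
    refine ⟨Φ, fun f => (hΦ f).trans (le_max_left _ _), by simp [hΦr, hL], Or.inr fun e => ?_⟩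
    simpa [lipConst_const] using hΦ (const 𝕜 X e)
  · obtain ⟨x₀, hx₀⟩ := exists_norm_apply_eq_iSup r
    rw [hsup] at hx₀
    obtain ⟨μ, hμ, hμr⟩ := exists_dual_vector 𝕜 (r x₀) (by simp [hx₀])
    refine ⟨μ.toLinearMap ∘ₗ eval 𝕜 x₀, fun f => ?_, by simp [hμr, hx₀],
      Or.inl ⟨x₀, μ, hμ, fun f => rfl⟩⟩
    simpa [hμ] using (μ.le_opNorm (f x₀)).trans (by simpa [hμ] using norm_apply_le f x₀)

end Slopes

namespace IsLipIso

variable {T : (X → E) → (Y → E)} (hT : IsLipIso 𝕜 T)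

def toLinearMap : bddLip 𝕜 X E →ₗ[𝕜] bddLip 𝕜 Y E where
  toFun f := ⟨T f, mem_iff.2 (hT.mapsLip f (isBddLip f))⟩
  map_add' f g := Subtype.ext (hT.map_add f g (isBddLip f) (isBddLip g))
  map_smul' c f := Subtype.ext (hT.map_smul c f (isBddLip f))

lemma bijective_toLinearMap : Bijective hT.toLinearMap := by
  refine ⟨(injective_iff_map_eq_zero _).2 fun f hf => Subtype.ext ?_, fun g => ?_⟩
  · refine eq_zero_of_lipNorm_le_zero (isBddLip f) ?_
    rw [← hT.norm_map f (isBddLip f)]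
    exact (congrArg lipNorm (congrArg Subtype.val hf)).trans lipNorm_zero |>.le
  · obtain ⟨f, hf, hTf⟩ := hT.surjOn g (isBddLip g)
    exact ⟨⟨f, mem_iff.2 hf⟩, Subtype.ext hTf⟩

def toLinearEquiv : bddLip 𝕜 X E ≃ₗ[𝕜] bddLip 𝕜 Y E :=
  LinearEquiv.ofBijective hT.toLinearMap hT.bijective_toLinearMap

lemma norm_toLinearEquiv (f : bddLip 𝕜 X E) : ‖hT.toLinearEquiv f‖ = ‖f‖ :=
  hT.norm_map f (isBddLip f)

end IsLipIso

section Standard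

lemma eq_of_forall_apply_eq {x₁ x₂ : X} {μ₁ μ₂ : StrongDual 𝕜 E} (hμ₁ : μ₁ ≠ 0)
    (h : ∀ f : bddLip 𝕜 X E, μ₁ (f x₁) = μ₂ (f x₂)) : x₁ = x₂ := by
  by_contra hx
  refine hμ₁ (ContinuousLinearMap.ext fun e => ?_)
  have hd : 0 < dist x₂ x₁ := dist_pos.2 (Ne.symm hx)
  have := h ⟨bump 𝕜 (dist x₂ x₁) x₁ e, mem_iff.2 (isBddLip_bump hd x₁ e)⟩
  simpa [bump_self, bump_of_le_dist hd le_rfl] using this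

lemma eq_of_forall_apply_add_apply_eq {x₁ x₂ x₃ : X} {μ₁ μ₂ μ₃ : StrongDual 𝕜 E} (hμ₁ : μ₁ ≠ 0)
    (hμ₂ : μ₂ ≠ 0) (h : ∀ f : bddLip 𝕜 X E, μ₁ (f x₁) + μ₂ (f x₂) = μ₃ (f x₃)) : x₁ = x₂ := by
  by_cases h₃₁ : x₃ = x₁
  · rw [h₃₁] at h
    exact (eq_of_forall_apply_eq hμ₂ (μ₂ := μ₃ - μ₁) fun f => by simp [← h f]).symm
  by_cases h₃₂ : x₃ = x₂
  · rw [h₃₂] at h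
    exact eq_of_forall_apply_eq hμ₁ (μ₂ := μ₃ - μ₂) fun f => by simp [← h f]
  have hμ₃ : μ₃ = 0 := by
    ext e
    set m := min (dist x₁ x₃) (dist x₂ x₃)
    have hm : 0 < m := lt_min (dist_pos.2 (Ne.symm h₃₁)) (dist_pos.2 (Ne.symm h₃₂))
    have := h ⟨bump 𝕜 m x₃ e, mem_iff.2 (isBddLip_bump hm x₃ e)⟩
    simpa [bump_self, bump_of_le_dist hm (min_le_left _ _),
      bump_of_le_dist hm (min_le_right _ _)] using this.symm
  exact eq_of_forall_apply_eq hμ₁ (μ₂ := -μ₂) fun f =>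
    eq_neg_of_add_eq_zero_left (by simp [h f, hμ₃])

variable {S : bddLip 𝕜 X E ≃ₗ[𝕜] bddLip 𝕜 Y E}

lemma norm_symm_apply (hS : ∀ f, ‖S f‖ = ‖f‖) (g : bddLip 𝕜 Y E) : ‖S.symm g‖ = ‖g‖ := by
  rw [← hS, S.apply_symm_apply]

lemma norm_apply_const_le [Nonempty X] (hS : ∀ f, ‖S f‖ = ‖f‖) (y : Y) (e : E) :
    ‖S (const 𝕜 X e) y‖ ≤ ‖e‖ := by
  simpa [hS, norm_const] using norm_apply_le (S (const 𝕜 X e)) y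

lemma IsSmooth.exists_eval_or_forall_const [CompactSpace X] [Nonempty X] (hsm : IsSmooth 𝕜 E)
    (hS : ∀ f, ‖S f‖ = ‖f‖) (y : Y) {e : E} (he : ‖e‖ = 1) {ν : StrongDual 𝕜 E} (hν : ‖ν‖ ≤ 1)
    (hνe : ν e = 1) :
    (∃ (x' : X) (μ : StrongDual 𝕜 E), ‖μ‖ = 1 ∧ ∀ f, ν (S f y) = μ (f x')) ∨
      ∀ e', ν (S (const 𝕜 X e') y) = 0 := by
  obtain ⟨Φ, hΦ, hΦr, hΦ'⟩ := exists_norming_functional (r := S.symm (peak 𝕜 y e))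
    (by rw [norm_symm_apply hS, norm_peak, he])
  have hΦS (f : bddLip 𝕜 X E) : Φ f = ν (S f y) := by
    simpa using hsm.apply_eq_of_apply_peak (Λ := Φ ∘ₗ S.symm.toLinearMap)
      (fun g => (hΦ _).trans_eq (norm_symm_apply hS g)) he (by simpa using hΦr) hν hνe (S f)
  simpa only [← hΦS] using hΦ'

lemma exists_eval_of_norm_eq_one [CompactSpace X] [Nonempty X] (hsm : IsSmooth 𝕜 E)
    (hrefl : IsReflexiveSp 𝕜 E) (hS : ∀ f, ‖S f‖ = ‖f‖) {y : Y}
    (hy : ∃ e, S (const 𝕜 X e) y ≠ 0) {ν : StrongDual 𝕜 E} (hν : ‖ν‖ = 1) :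
    ∃ (x' : X) (μ : StrongDual 𝕜 E), ‖μ‖ = 1 ∧ ∀ f, ν (S f y) = μ (f x') := by
  obtain ⟨e, he, hνe⟩ := hrefl.exists_apply_eq_one hν
  refine (hsm.exists_eval_or_forall_const hS y he hν.le hνe).resolve_right fun hν₀ => ?_
  -- `ν₃ = (w + 3ν) / ‖w + 3ν‖` sees the constants, but with norm at most `1 / 2`
  obtain ⟨e₁, he₁⟩ := hy
  obtain ⟨w, hw, hwe₁⟩ := exists_dual_vector 𝕜 _ (norm_ne_zero_iff.2 he₁)
  set s := ‖w + (3 : 𝕜) • ν‖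
  have hs : 2 ≤ s := by
    have := norm_sub_le (w + (3 : 𝕜) • ν) w
    rw [add_sub_cancel_left, norm_smul, hν, hw] at this
    norm_num at this
    linarith
  set ν₃ := (s⁻¹ : 𝕜) • (w + (3 : 𝕜) • ν)
  have hν₃ : ‖ν₃‖ = 1 := norm_smul_inv_norm fun h => by norm_num [s, h] at hs
  have hν₃const (e' : E) : ν₃ (S (const 𝕜 X e') y) = (s⁻¹ : 𝕜) * w (S (const 𝕜 X e') y) := by
    simp [ν₃, hν₀]
  obtain ⟨e₃, he₃, hν₃e₃⟩ := hrefl.exists_apply_eq_one hν₃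
  rcases hsm.exists_eval_or_forall_const hS y he₃ hν₃.le hν₃e₃ with ⟨x₃, μ₃, hμ₃, hν₃μ₃⟩ | hν₃₀
  · have hμ₃le : ‖μ₃‖ ≤ s⁻¹ := μ₃.opNorm_le_bound (by positivity) fun e' => by
      have hwle : ‖w (S (const 𝕜 X e') y)‖ ≤ ‖e'‖ :=
        (w.le_opNorm _).trans (by simpa [hw] using norm_apply_const_le hS y e')
      have hμ₃e' : μ₃ e' = ν₃ (S (const 𝕜 X e') y) := by simp [hν₃μ₃]
      rw [hμ₃e', hν₃const, norm_mul, norm_inv, RCLike.norm_ofReal,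
        abs_of_nonneg (norm_nonneg _)]
      gcongr
    rw [hμ₃] at hμ₃le
    have : s⁻¹ ≤ 2⁻¹ := inv_anti₀ two_pos hs
    linarith
  · have := hν₃₀ e₁
    rw [hν₃const, hwe₁] at this
    simp [s, he₁] at this
    norm_num [s, this] at hs

lemma exists_eval [CompactSpace X] [Nonempty X] (hsm : IsSmooth 𝕜 E) (hrefl : IsReflexiveSp 𝕜 E)
    (hS : ∀ f, ‖S f‖ = ‖f‖) {y : Y} (hy : ∃ e, S (const 𝕜 X e) y ≠ 0) (ν : StrongDual 𝕜 E) :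
    ∃ (x' : X) (μ : StrongDual 𝕜 E), ∀ f, ν (S f y) = μ (f x') := by
  rcases eq_or_ne ν 0 with rfl | hν
  · exact ⟨Classical.arbitrary X, 0, fun _ => rfl⟩
  obtain ⟨x', μ, -, hμ⟩ :=
    exists_eval_of_norm_eq_one hsm hrefl hS hy (norm_smul_inv_norm (𝕜 := 𝕜) hν)
  refine ⟨x', (‖ν‖ : 𝕜) • μ, fun f => ?_⟩
  have hν₀ : (‖ν‖ : 𝕜) ≠ 0 := by simpa using hν
  rw [smul_apply, ← hμ, smul_apply, smul_eq_mul, smul_eq_mul, mul_inv_cancel_left₀ hν₀]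

lemma apply_eq_apply_const [CompactSpace X] [Nonempty X] (hsm : IsSmooth 𝕜 E)
    (hrefl : IsReflexiveSp 𝕜 E) (hS : ∀ f, ‖S f‖ = ‖f‖) {x : X} {y : Y}
    {w ρ : StrongDual 𝕜 E} (hρ : ρ ≠ 0) (hseed : ∀ f, w (S f y) = ρ (f x))
    (f : bddLip 𝕜 X E) : S f y = S (const 𝕜 X (f x)) y := by
  have hy : ∃ e, S (const 𝕜 X e) y ≠ 0 := by
    obtain ⟨e, he⟩ : ∃ e, ρ e ≠ 0 := by
      by_contra! h
      exact hρ (ContinuousLinearMap.ext h)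
    exact ⟨e, fun h0 => he (by simpa [h0] using (hseed (const 𝕜 X e)).symm)⟩
  refine (SeparatingDual.eq_iff_forall_dual_eq (R := 𝕜)).2 fun ν => ?_
  obtain ⟨x', μ, hμ⟩ := exists_eval hsm hrefl hS hy ν
  rw [hμ, hμ, coe_const]
  rcases eq_or_ne μ 0 with rfl | hμ₀
  · rfl
  obtain ⟨x₃, μ₃, hμ₃⟩ := exists_eval hsm hrefl hS hy (w + ν)
  have hx' : x = x' := eq_of_forall_apply_add_apply_eq hρ hμ₀ fun g => by
    simpa [hseed, hμ] using hμ₃ g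
  rw [hx']

theorem exists_linearIsometryEquiv_of_seed [CompactSpace X] [CompactSpace Y] [Nonempty X]
    [Nonempty Y] (hsm : IsSmooth 𝕜 E) (hrefl : IsReflexiveSp 𝕜 E) (hS : ∀ f, ‖S f‖ = ‖f‖)
    {x : X} {y : Y} {w ρ : StrongDual 𝕜 E} (hρ : ρ ≠ 0)
    (hseed : ∀ f, w (S f y) = ρ (f x)) :
    ∃ B : E ≃ₗᵢ[𝕜] E, ∀ f, S f y = B (f x) := by
  have hw : w ≠ 0 := by
    rintro rfl
    exact hρ (ContinuousLinearMap.ext fun e => by simpa using (hseed (const 𝕜 X e)).symm)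
  have hS' := norm_symm_apply hS
  have hA := apply_eq_apply_const hsm hrefl hS hρ hseed
  have hA' := apply_eq_apply_const hsm hrefl hS' hw fun g => by simpa using (hseed (S.symm g)).symm
  let A : E ≃ₗ[𝕜] E :=
    { eval 𝕜 y ∘ₗ S.toLinearMap ∘ₗ const 𝕜 X with
      invFun e := S.symm (const 𝕜 Y e) x
      left_inv e := by simpa using (hA' (S (const 𝕜 X e))).symm
      right_inv e := by simpa using (hA (S.symm (const 𝕜 Y e))).symm }
  exact ⟨.ofBounds A (norm_apply_const_le hS y) (norm_apply_const_le hS' x), hA⟩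

theorem exists_linearIsometryEquiv_of_peak [CompactSpace X] [CompactSpace Y] (hsm : IsSmooth 𝕜 E)
    (hrefl : IsReflexiveSp 𝕜 E) (hS : ∀ f, ‖S f‖ = ‖f‖) {x : X} {y : Y} {w : StrongDual 𝕜 E}
    (hw : ‖w‖ ≤ 1) {e : E} (he : ‖e‖ = 1) (hpeak : w (S (peak 𝕜 x e) y) = 1) :
    ∃ B : E ≃ₗᵢ[𝕜] E, ∀ f, S f y = B (f x) := by
  have : Nonempty X := ⟨x⟩
  have : Nonempty Y := ⟨y⟩
  have hΛ (f : bddLip 𝕜 X E) : ‖w (S f y)‖ ≤ ‖f‖ :=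
    (w.le_opNorm _).trans (mul_le_of_le_one_left (norm_nonneg _) hw) |>.trans
      ((norm_apply_le _ y).trans_eq (hS f))
  obtain ⟨ρ, -, hρe, hseed⟩ :=
    exists_dual_of_apply_peak (Λ := w.toLinearMap ∘ₗ eval 𝕜 y ∘ₗ S.toLinearMap) hΛ he hpeak
  exact exists_linearIsometryEquiv_of_seed hsm hrefl hS (by rintro rfl; simp at hρe) hseed

theorem IsLipIso.exists_linearIsometryEquiv [CompactSpace X] [CompactSpace Y]
    (hsm : IsSmooth 𝕜 E) (hrefl : IsReflexiveSp 𝕜 E) {T : (X → E) → (Y → E)}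
    (hT : IsLipIso 𝕜 T) {x : X} {y : Y} {w : StrongDual 𝕜 E} (hw : ‖w‖ ≤ 1) {e : E} (he : e ≠ 0)
    (hpeak : w (T (bump 𝕜 2 x e) y) = ‖e‖) :
    ∃ B : E ≃ₗᵢ[𝕜] E, ∀ f, IsBddLip f → T f y = B (f x) := by
  have hpeak' : w (hT.toLinearEquiv (peak 𝕜 x ((‖e‖⁻¹ : 𝕜) • e)) y) = 1 := by
    have hne : (‖e‖ : 𝕜) ≠ 0 := by simpa using he
    rw [(peak 𝕜 x).map_smul, LinearEquiv.map_smul]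
    change w ((‖e‖⁻¹ : 𝕜) • T (bump 𝕜 2 x e) y) = 1
    rw [w.map_smul, hpeak, smul_eq_mul, inv_mul_cancel₀ hne]
  obtain ⟨B, hB⟩ := exists_linearIsometryEquiv_of_peak hsm hrefl hT.norm_toLinearEquiv hw
    (norm_smul_inv_norm he) hpeak'
  exact ⟨B, fun f hf => hB ⟨f, mem_iff.2 hf⟩⟩

end Standard

theorem Is2LocalLipIso.exists_linearIsometryEquiv [CompactSpace X] [CompactSpace Y]
    (hsm : IsSmooth 𝕜 E) (hrefl : IsReflexiveSp 𝕜 E) {Δ : (X → E) → (Y → E)}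
    (hΔ : Is2LocalLipIso 𝕜 Δ) {x : X} {y : Y} {f : X → E} (hf : IsBddLip f) {e : E} (he : e ≠ 0)
    {w : StrongDual 𝕜 E} (hw : ‖w‖ ≤ 1) (hpeak : w (Δ (bump 𝕜 2 x e) y) = ‖e‖) :
    ∃ B : E ≃ₗᵢ[𝕜] E, Δ f y = B (f x) ∧ Δ (bump 𝕜 2 x e) y = B e := by
  obtain ⟨T, hT, hTf, hTe⟩ := hΔ f _ hf (isBddLip_bump (𝕜 := 𝕜) two_pos x e)
  obtain ⟨B, hB⟩ := hT.exists_linearIsometryEquiv hsm hrefl hw he (by rwa [← hTe])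
  exact ⟨B, by rw [hTf, hB f hf], by rw [hTe, hB _ (isBddLip_bump two_pos x e), bump_self]⟩

end

theorem stmt16_general {𝕜 X Y E : Type*} [RCLike 𝕜]
    [MetricSpace X] [CompactSpace X]
    [MetricSpace Y] [CompactSpace Y]
    [NormedAddCommGroup E] [NormedSpace 𝕜 E]
    (hsm : IsSmooth 𝕜 E) (hrefl : IsReflexiveSp 𝕜 E)
    (Δ : (X → E) → (Y → E)) (hΔ : Is2LocalLipIso 𝕜 Δ)
    (y : Y) (x : X) (u v : StrongDual 𝕜 E) (hu : ‖u‖ = 1) (hv : ‖v‖ = 1)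
    (hsupp : ∀ h : X → E, IsBddLip h → v (Δ h y) = u (h x)) :
    (∀ f₁ f₂ : X → E, IsBddLip f₁ → IsBddLip f₂ → f₁ x = f₂ x → Δ f₁ y = Δ f₂ y) ∧
    ∃ V : E → E,
      (∀ f : X → E, IsBddLip f → V (f x) = Δ f y) ∧
      (∀ e₁ e₂ : E, ∃ W : E ≃ₗᵢ[𝕜] E, V e₁ = W e₁ ∧ V e₂ = W e₂) ∧
      (TwoIsoReflexive 𝕜 E →
        (∀ a b : E, V (a + b) = V a + V b) ∧ (∀ (c : 𝕜) (a : E), V (c • a) = c • V a) ∧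
        Function.Surjective V ∧ ∀ a : E, ‖V a‖ = ‖a‖) := by
  set V : E → E := fun e => Δ (bump 𝕜 2 x e) y
  have hbump (e : E) : IsBddLip (bump 𝕜 2 x e) := isBddLip_bump two_pos x e
  obtain ⟨e₀, he₀, hue₀⟩ := hrefl.exists_apply_eq_one hu
  have he₀' : e₀ ≠ 0 := norm_ne_zero_iff.1 (by simp [he₀])
  have hpeak₀ : v (V e₀) = ‖e₀‖ := by simp [V, hsupp _ (hbump e₀), bump_self, hue₀, he₀]
  have hnorm (e : E) : ‖V e‖ = ‖e‖ := by
    obtain ⟨B, hB, -⟩ := hΔ.exists_linearIsometryEquiv hsm hrefl (hbump e) he₀' hv.le hpeak₀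
    change ‖Δ (bump 𝕜 2 x e) y‖ = ‖e‖
    rw [hB, bump_self, B.norm_map]
  have hlocal (f : X → E) (hf : IsBddLip f) (e : E) :
      ∃ B : E ≃ₗᵢ[𝕜] E, Δ f y = B (f x) ∧ V e = B e := by
    rcases eq_or_ne e 0 with rfl | he
    · obtain ⟨B, hB, -⟩ := hΔ.exists_linearIsometryEquiv hsm hrefl hf he₀' hv.le hpeak₀
      exact ⟨B, hB, by rw [map_zero, ← norm_eq_zero, hnorm, norm_zero]⟩
    · obtain ⟨w, hw, hwe⟩ := exists_dual_vector 𝕜 (V e) (by simpa [hnorm] using he)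
      exact hΔ.exists_linearIsometryEquiv hsm hrefl hf he hw.le (by rw [hwe, hnorm])
  have hV (f : X → E) (hf : IsBddLip f) : Δ f y = V (f x) := by
    obtain ⟨B, hB, hBe⟩ := hlocal f hf (f x)
    rw [hB, hBe]
  have hV₂ (e₁ e₂ : E) : ∃ W : E ≃ₗᵢ[𝕜] E, V e₁ = W e₁ ∧ V e₂ = W e₂ := by
    simpa [bump_self] using hlocal _ (hbump e₁) e₂
  refine ⟨fun f₁ f₂ hf₁ hf₂ h => by rw [hV f₁ hf₁, hV f₂ hf₂, h], V, fun f hf => (hV f hf).symm,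
    hV₂, fun h2 => ?_⟩
  obtain ⟨hadd, hsmul, hsurj⟩ := h2 V hV₂
  exact ⟨hadd, hsmul, hsurj, hnorm⟩

/-- The map `V(e) = Δ(f)(y)` (for any `f` with `f(x) = e`) is well defined and is a 2-local
isometry on `E`; if `E` is 2-iso-reflexive, it is a surjective linear isometry. -/
theorem stmt16 {𝕜 X Y E : Type*} [RCLike 𝕜]
    [MetricSpace X] [CompactSpace X] [PathConnectedSpace X]
    [MetricSpace Y] [CompactSpace Y] [PathConnectedSpace Y]
    [NormedAddCommGroup E] [NormedSpace 𝕜 E] [CompleteSpace E]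
    (hsm : IsSmooth 𝕜 E) (hrefl : IsReflexiveSp 𝕜 E)
    (Δ : (X → E) → (Y → E)) (hΔ : Is2LocalLipIso 𝕜 Δ)
    (y : Y) (x : X) (u v : StrongDual 𝕜 E) (hu : ‖u‖ = 1) (hv : ‖v‖ = 1)
    (hsupp : ∀ h : X → E, IsBddLip h → v (Δ h y) = u (h x)) :
    (∀ f₁ f₂ : X → E, IsBddLip f₁ → IsBddLip f₂ → f₁ x = f₂ x → Δ f₁ y = Δ f₂ y) ∧
    ∃ V : E → E,
      (∀ f : X → E, IsBddLip f → V (f x) = Δ f y) ∧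
      (∀ e₁ e₂ : E, ∃ W : E ≃ₗᵢ[𝕜] E, V e₁ = W e₁ ∧ V e₂ = W e₂) ∧
      (TwoIsoReflexive 𝕜 E →
        (∀ a b : E, V (a + b) = V a + V b) ∧ (∀ (c : 𝕜) (a : E), V (c • a) = c • V a) ∧
        Function.Surjective V ∧ ∀ a : E, ‖V a‖ = ‖a‖) :=
  stmt16_general hsm hrefl Δ hΔ y x u v hu hv hsupp
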